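/- Fix an integer m ≥ 1. There are m passengers and m edges labeled 1, …, m. Each passenger may take the full option (which uses all m edges and has value 1), a single-edge option e for any edge e (which uses only edge e and has value 1/2), or remain unassigned (value 0); a joint assignment is feasible if each edge is used by at most one passenger in total. Let OPT_restricted be the maximum total value over feasible assignments in which every assigned passenger takes the full option (her maximum-value option), and let OPT_general be the maximum total value over all feasible assignments. Then OPT_restricted = 1 and OPT_general ≥ m/2; in particular the ratio OPT_general / OPT_restricted is at least m/2, so the trip-optimality gap is unbounded as m grows. -/

import Mathlib

/-- A trip option for the instance of Proposition A.1: the full route (all `m` edges),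
a single-edge sub-route, or no assignment. -/
inductive TripOpt (m : ℕ) where
  | full : TripOpt m
  | single : Fin m → TripOpt m
  | unassigned : TripOpt m
deriving DecidableEq

/-- Edges used by a trip option. -/
def TripOpt.uses {m : ℕ} : TripOpt m → Finset (Fin m)
  | .full => Finset.univ
  | .single e => {e}
  | .unassigned => ∅

/-- Value of a trip option: the full route is worth `1`, a single edge `1/2`, none `0`. -/
noncomputable def TripOpt.val {m : ℕ} : TripOpt m → ℝ
  | .full => 1
  | .single _ => 1 / 2
  | .unassigned => 0

/-- A joint assignment of the `m` passengers is feasible if each edge is used by at most one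
passenger (bus capacity 1, frequency 1). -/
def tripFeasible {m : ℕ} (a : Fin m → TripOpt m) : Prop :=
  ∀ e : Fin m, (Finset.univ.filter (fun p => e ∈ (a p).uses)).card ≤ 1

/-- Total value of a joint assignment. -/
noncomputable def tripTotal {m : ℕ} (a : Fin m → TripOpt m) : ℝ := ∑ p, (a p).val


/-! Any two full routes share every edge, so at most one passenger can ride the full route,
while the single-edge options of distinct edges are disjoint, so all `m` passengers can be
served at value `1/2` each. -/

section

variable {m : ℕ}

theorem tripFeasible_iff {a : Fin m → TripOpt m} :
    tripFeasible a ↔ ∀ e p q, e ∈ (a p).uses → e ∈ (a q).uses → p = q := by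
  simp only [tripFeasible, Finset.card_le_one, Finset.mem_filter, Finset.mem_univ, true_and]
  exact ⟨fun h e p q hp hq => h e p hp q hq, fun h e p hp q hq => h e p q hp hq⟩

def soloFull (p₀ : Fin m) : Fin m → TripOpt m :=
  fun p => if p = p₀ then .full else .unassigned

theorem soloFull_eq_full_or_unassigned (p₀ p : Fin m) :
    soloFull p₀ p = .full ∨ soloFull p₀ p = .unassigned := by
  by_cases h : p = p₀ <;> simp [soloFull, h]

theorem tripFeasible_soloFull (p₀ : Fin m) : tripFeasible (soloFull p₀) := by
  refine tripFeasible_iff.2 fun e p q hp hq => ?_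
  by_cases h₁ : p = p₀ <;> by_cases h₂ : q = p₀ <;> simp_all [soloFull, TripOpt.uses]

theorem tripTotal_soloFull (p₀ : Fin m) : tripTotal (soloFull p₀) = 1 := by
  rw [tripTotal,
    Finset.sum_eq_single p₀ (fun p _ hp => by simp [soloFull, hp, TripOpt.val]) (by simp)]
  simp [soloFull, TripOpt.val]

theorem tripFeasible_single : tripFeasible (m := m) .single :=
  tripFeasible_iff.2 fun e p q hp hq => by
    simp only [TripOpt.uses, Finset.mem_singleton] at hp hq
    rw [← hp, ← hq]

theorem tripTotal_single : tripTotal (m := m) .single = m / 2 := by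
  simp [tripTotal, TripOpt.val, div_eq_mul_inv]

theorem card_filter_eq_full_le_one (hm : 1 ≤ m) {a : Fin m → TripOpt m}
    (ha : tripFeasible a) : (Finset.univ.filter fun p => a p = .full).card ≤ 1 :=
  Finset.card_le_one.2 fun p hp q hq => by
    simp only [Finset.mem_filter, Finset.mem_univ, true_and] at hp hq
    exact tripFeasible_iff.1 ha ⟨0, hm⟩ p q
      (by simp [hp, TripOpt.uses]) (by simp [hq, TripOpt.uses])

theorem tripTotal_le_one_of_full_or_unassigned (hm : 1 ≤ m) {a : Fin m → TripOpt m}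
    (ha : tripFeasible a) (hfull : ∀ p, a p = .full ∨ a p = .unassigned) :
    tripTotal a ≤ 1 := by
  have hcount : tripTotal a = (Finset.univ.filter fun p => a p = .full).card := by
    rw [tripTotal, Finset.card_filter, Nat.cast_sum]
    refine Finset.sum_congr rfl fun p _ => ?_
    rcases hfull p with h | h <;> simp [h, TripOpt.val]
  rw [hcount]
  exact_mod_cast card_filter_eq_full_le_one hm ha

end

/-- Proposition A.1 (unbounded trip-optimality gap): with `m` passengers on a single line of
`m` edges, if every assigned passenger must take her maximum-value (full) option the optimal
welfare is `1`, whereas allowing arbitrary sub-routes achieves at least `m/2`; hence the ratio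
is at least `m/2`. -/
theorem stmt10 (m : ℕ) (hm : 1 ≤ m) (OPTr OPTg : ℝ)
    (hOPTr : IsGreatest
      {y | ∃ a : Fin m → TripOpt m, tripFeasible a ∧
        (∀ p, a p = .full ∨ a p = .unassigned) ∧ y = tripTotal a} OPTr)
    (hOPTg : IsGreatest
      {y | ∃ a : Fin m → TripOpt m, tripFeasible a ∧ y = tripTotal a} OPTg) :
    OPTr = 1 ∧ (m : ℝ) / 2 ≤ OPTg ∧ (m : ℝ) / 2 ≤ OPTg / OPTr := by
  have hOPTr_eq : OPTr = 1 := by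
    obtain ⟨a, ha, hfull, rfl⟩ := hOPTr.1
    exact le_antisymm (tripTotal_le_one_of_full_or_unassigned hm ha hfull)
      (hOPTr.2 ⟨soloFull ⟨0, hm⟩, tripFeasible_soloFull _, soloFull_eq_full_or_unassigned _,
        (tripTotal_soloFull _).symm⟩)
  have hOPTg_ge : (m : ℝ) / 2 ≤ OPTg :=
    hOPTg.2 ⟨.single, tripFeasible_single, tripTotal_single.symm⟩
  exact ⟨hOPTr_eq, hOPTg_ge, by rwa [hOPTr_eq, div_one]⟩
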